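/- Let E be a directed graph and K a field. The Jacobson radical of the path algebra KE equals the K-vector space spanned by the paths without return, i.e., the paths λ of length ≥ 1 for which there is no path μ with s(μ) = r(λ) and r(μ) = s(λ). Moreover, this equals the two-sided ideal generated by the edges without return. -/

import Mathlib

/-!
The span `N` of the paths without return is a two-sided ideal, and its elements are nilpotent:
for a finite set `W` of vertices, the number of vertices of `W` reachable from `s(λ)` but not
from `r(λ)` is superadditive under concatenation, at least one for a path without return
starting in `W`, and at most `|W|`. Hence `N ⊆ rad(KE)`.

Conversely, let `z ∈ rad(KE)` have a nonzero coefficient at a path `p` with a return path `q`.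
Then `t = s(p) z q` lies in the corner ring at `v = s(p)`, and its coefficient at `pq` is that
of `z` at `p`. Since every `k t` is quasi-regular, `v - t` has a right inverse in the corner
ring; comparing longest paths, this forces `t ∈ K v`, and then `t = 0` because the nonzero
idempotent `v` is not quasi-regular.

Finally, every path without return passes through an edge without return, so `N` is generated
by those edges as a two-sided ideal.
-/

/-- A directed graph: vertices, edges, source and range maps. -/
structure DGraph : Type 1 where
  V : Type
  Edge : Type
  s : Edge → V
  r : Edge → V

namespace DGraph

/-- A list of edges is composable if consecutive edges match up. -/
def IsComposable (G : DGraph) (l : List G.Edge) : Prop :=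
  l.Chain' (fun e f => G.r e = G.s f)

/-- A path in `G`: either a trivial path at a vertex, or a nonempty composable list of edges. -/
def GPath (G : DGraph) : Type :=
  G.V ⊕ {l : List G.Edge // l ≠ [] ∧ G.IsComposable l}

namespace GPath

variable {G : DGraph}

/-- The source of a path. -/
def src : GPath G → G.V
  | Sum.inl v => v
  | Sum.inr l => G.s (l.1.head l.2.1)

/-- The range of a path. -/
def rng : GPath G → G.V
  | Sum.inl v => v
  | Sum.inr l => G.r (l.1.getLast l.2.1)

/-- The length of a path. -/
def length : GPath G → ℕ
  | Sum.inl _ => 0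
  | Sum.inr l => l.1.length

/-- The trivial path at a vertex. -/
def ofVertex (v : G.V) : GPath G := Sum.inl v

/-- The length-one path given by an edge. -/
def ofEdge (e : G.Edge) : GPath G :=
  Sum.inr ⟨[e], by simp, List.isChain_singleton e⟩

/-- Concatenation of composable paths. -/
def comp : (p q : GPath G) → p.rng = q.src → GPath G
  | Sum.inl _, q, _ => q
  | Sum.inr l, Sum.inl _, _ => Sum.inr l
  | Sum.inr l, Sum.inr m, h => Sum.inr ⟨l.1 ++ m.1, by
      refine ⟨by simp [l.2.1], l.2.2.append m.2.2 ?_⟩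
      intro x hx y hy
      rw [List.getLast?_eq_some_getLast l.2.1] at hx
      rw [List.head?_eq_head m.2.1] at hy
      cases hx
      cases hy
      exact h⟩

end GPath

end DGraph

open DGraph

/-- A realization of the path algebra of the graph `G` over the field `K`:
a `K`-algebra with a basis indexed by the paths of `G`, multiplying by concatenation. -/
structure PathAlgebraOn (K : Type) [Field K] (G : DGraph) (A : Type)
    [NonUnitalRing A] [Module K A] where
  basis : Module.Basis (GPath G) K A
  mul_comp : ∀ (p q : GPath G) (h : p.rng = q.src),
      basis p * basis q = basis (p.comp q h)
  mul_ncomp : ∀ p q : GPath G, p.rng ≠ q.src → basis p * basis q = 0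

/-- `z` is quasi-regular. -/
def QuasiReg (A : Type) [NonUnitalRing A] (z : A) : Prop :=
  ∃ z' : A, z + z' - z * z' = 0 ∧ z' + z - z' * z = 0

/-- The Jacobson radical of a (possibly nonunital) ring: all `z` such that `a * z * b`
is quasi-regular for all `a, b`. -/
def jacRad (A : Type) [NonUnitalRing A] : Set A :=
  {z : A | ∀ a b : A, QuasiReg A (a * z * b)}

/-- A path without return: a nontrivial path `λ` such that no path goes from `r(λ)`
back to `s(λ)`. -/
def DGraph.NoReturnPath (G : DGraph) (p : DGraph.GPath G) : Prop :=
  0 < p.length ∧ ¬ ∃ q : DGraph.GPath G, q.src = p.rng ∧ q.rng = p.src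

/-- An edge without return. -/
def DGraph.NoReturnEdge (G : DGraph) (e : G.Edge) : Prop :=
  ¬ ∃ q : DGraph.GPath G, q.src = G.r e ∧ q.rng = G.s e

namespace DGraph

def Reachable (G : DGraph) (a b : G.V) : Prop :=
  ∃ q : GPath G, q.src = a ∧ q.rng = b

namespace GPath

variable {G : DGraph}

def toList : GPath G → List G.Edge
  | Sum.inl _ => []
  | Sum.inr l => l.1

lemma length_eq_length_toList (p : GPath G) : p.length = p.toList.length := by
  cases p <;> rfl

lemma eq_ofVertex_of_length_eq_zero {p : GPath G} (h : p.length = 0) : p = ofVertex p.src := by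
  cases p with
  | inl v => rfl
  | inr l => exact absurd (List.length_eq_zero_iff.mp h) l.2.1

lemma ext_src_toList {p p' : GPath G} (hs : p.src = p'.src) (hl : p.toList = p'.toList) :
    p = p' := by
  cases p with
  | inl v =>
    cases p' with
    | inl v' => exact congrArg Sum.inl hs
    | inr l' => exact absurd hl.symm l'.2.1
  | inr l =>
    cases p' with
    | inl v' => exact absurd hl l.2.1
    | inr l' => exact congrArg Sum.inr (Subtype.ext hl)

@[simp] lemma comp_ofVertex (p : GPath G) (v : G.V) (h : p.rng = (ofVertex v).src) :
    p.comp (ofVertex v) h = p := by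
  cases p with
  | inl u => exact congrArg Sum.inl h.symm
  | inr l => rfl

lemma toList_comp (p q : GPath G) (h : p.rng = q.src) :
    (p.comp q h).toList = p.toList ++ q.toList := by
  rcases p with u | l
  · rfl
  · rcases q with w | m
    · exact (List.append_nil _).symm
    · rfl

@[simp] lemma src_comp (p q : GPath G) (h : p.rng = q.src) : (p.comp q h).src = p.src := by
  rcases p with u | l
  · exact h.symm
  · rcases q with w | m
    · rfl
    · exact congrArg G.s (List.head_append_left l.2.1)

@[simp] lemma rng_comp (p q : GPath G) (h : p.rng = q.src) : (p.comp q h).rng = q.rng := by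
  rcases p with u | l
  · rfl
  · rcases q with w | m
    · exact h
    · exact congrArg G.r (List.getLast_append_of_ne_nil _ m.2.1)

lemma length_comp (p q : GPath G) (h : p.rng = q.src) :
    (p.comp q h).length = p.length + q.length := by
  simp only [length_eq_length_toList, toList_comp, List.length_append]

lemma comp_injective {p q p' q' : GPath G} (h : p.rng = q.src) (h' : p'.rng = q'.src)
    (hlen : p.length = p'.length) (heq : p.comp q h = p'.comp q' h') : p = p' ∧ q = q' := by
  have hl := congrArg toList heq
  rw [toList_comp, toList_comp] at hl
  rw [length_eq_length_toList, length_eq_length_toList] at hlen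
  obtain ⟨hp, hq⟩ := List.append_inj hl hlen
  have hpp' : p = p' := ext_src_toList (by simpa using congrArg src heq) hp
  subst hpp'
  exact ⟨rfl, ext_src_toList (h.symm.trans h') hq⟩

lemma comp_inj_left {p p' q : GPath G} (h : p.rng = q.src) (h' : p'.rng = q.src) :
    p.comp q h = p'.comp q h' ↔ p = p' := by
  refine ⟨fun heq => (comp_injective h h' ?_ heq).1, fun hp => by subst hp; rfl⟩
  have hlen := congrArg length heq
  rw [length_comp, length_comp] at hlen
  omega

end GPath

variable {G : DGraph}

lemma Reachable.refl (a : G.V) : G.Reachable a a := ⟨GPath.ofVertex a, rfl, rfl⟩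

lemma Reachable.trans {a b c : G.V} (hab : G.Reachable a b) (hbc : G.Reachable b c) :
    G.Reachable a c := by
  obtain ⟨p, rfl, rfl⟩ := hab
  obtain ⟨q, hq, rfl⟩ := hbc
  exact ⟨p.comp q hq.symm, by simp, by simp⟩

lemma GPath.reachable (p : GPath G) : G.Reachable p.src p.rng := ⟨p, rfl, rfl⟩

lemma NoReturnPath.comp_left {p q : GPath G} (h : p.rng = q.src) (hq : G.NoReturnPath q) :
    G.NoReturnPath (p.comp q h) := by
  refine ⟨by rw [GPath.length_comp]; exact Nat.add_pos_right _ hq.1, fun hret => hq.2 ?_⟩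
  have hret' : G.Reachable q.rng p.src := by
    rw [GPath.src_comp, GPath.rng_comp] at hret; exact hret
  exact hret'.trans (h ▸ p.reachable)

lemma NoReturnPath.comp_right {p q : GPath G} (h : p.rng = q.src) (hp : G.NoReturnPath p) :
    G.NoReturnPath (p.comp q h) := by
  refine ⟨by rw [GPath.length_comp]; exact Nat.add_pos_left hp.1 _, fun hret => hp.2 ?_⟩
  have hret' : G.Reachable q.rng p.src := by
    rw [GPath.src_comp, GPath.rng_comp] at hret; exact hret
  rw [h]
  exact q.reachable.trans hret'

lemma reachable_of_not_noReturnPath {p : GPath G} (hp : ¬ G.NoReturnPath p) :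
    G.Reachable p.rng p.src := by
  by_cases hlen : p.length = 0
  · rw [GPath.eq_ofVertex_of_length_eq_zero hlen]
    exact Reachable.refl _
  · by_contra hret
    exact hp ⟨Nat.pos_of_ne_zero hlen, hret⟩

lemma NoReturnEdge.noReturnPath_ofEdge {e : G.Edge} (he : G.NoReturnEdge e) :
    G.NoReturnPath (GPath.ofEdge e) :=
  ⟨Nat.one_pos, he⟩

open Classical in
noncomputable def GPath.noReturnVertices (W : Finset G.V) (p : GPath G) : Finset G.V :=
  W.filter fun w => G.Reachable p.src w ∧ ¬ G.Reachable p.rng w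

lemma GPath.card_noReturnVertices_add_le (W : Finset G.V) {p q : GPath G} (h : p.rng = q.src) :
    (p.noReturnVertices W).card + (q.noReturnVertices W).card ≤
      ((p.comp q h).noReturnVertices W).card := by
  classical
  rw [← Finset.card_union_of_disjoint]
  · refine Finset.card_le_card fun w hw => ?_
    simp only [noReturnVertices, Finset.mem_union, Finset.mem_filter, src_comp, rng_comp] at hw ⊢
    rcases hw with ⟨hW, hpw, hnot⟩ | ⟨hW, hqw, hnot⟩
    · exact ⟨hW, hpw, fun hqw => hnot (h ▸ q.reachable.trans hqw)⟩
    · exact ⟨hW, (h ▸ p.reachable).trans hqw, hnot⟩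
  · refine Finset.disjoint_left.mpr fun w hpw hqw => ?_
    simp only [noReturnVertices, Finset.mem_filter] at hpw hqw
    exact hpw.2.2 (h ▸ hqw.2.1)

lemma GPath.card_noReturnVertices_le (W : Finset G.V) (p : GPath G) :
    (p.noReturnVertices W).card ≤ W.card := by
  classical
  exact Finset.card_filter_le _ _

lemma NoReturnPath.one_le_card_noReturnVertices {W : Finset G.V} {p : GPath G}
    (hp : G.NoReturnPath p) (hW : p.src ∈ W) : 1 ≤ (p.noReturnVertices W).card := by
  classical
  refine Finset.one_le_card.mpr ⟨p.src, ?_⟩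
  simp only [GPath.noReturnVertices, Finset.mem_filter]
  exact ⟨hW, Reachable.refl _, hp.2⟩

end DGraph

section QuasiRegular

variable {A : Type} [NonUnitalRing A]

lemma QuasiReg.eq_zero_of_isIdempotentElem {e : A} (he : IsIdempotentElem e)
    (h : QuasiReg A e) : e = 0 := by
  obtain ⟨w, hw, -⟩ := h
  have hew := congrArg (e * ·) hw
  simp only [mul_sub, mul_add, ← mul_assoc, he.eq, mul_zero, add_sub_cancel_right] at hew
  exact hew

/-- Mathlib's `IsQuasiregular` is for the operation `x + y + x * y`, so `QuasiReg A z` is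
`IsQuasiregular (-z)`. -/
lemma quasiReg_of_isNilpotent (R : Type) [CommRing R] [Module R A] [IsScalarTower R A A]
    [SMulCommClass R A A] {z : A} (hz : IsNilpotent (z : Unitization R A)) : QuasiReg A z := by
  have hunit : IsUnit (1 + ((-z : A) : Unitization R A)) := by
    rw [Unitization.inr_neg, ← sub_eq_add_neg]
    exact hz.isUnit_one_sub
  obtain ⟨y, hy₁, hy₂⟩ := isQuasiregular_iff.mp ((isQuasiregular_iff_isUnit' R).mpr hunit)
  refine ⟨-y, ?_, ?_⟩
  · rw [← neg_eq_zero, ← hy₁]; noncomm_ring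
  · rw [← neg_eq_zero, ← hy₂]; noncomm_ring

lemma isNilpotent_inr_of_filtration (R : Type) [CommRing R] [Module R A] [IsScalarTower R A A]
    [SMulCommClass R A A] {M : ℕ → Set A}
    (hmul : ∀ j k x y, x ∈ M j → y ∈ M k → x * y ∈ M (j + k)) {z : A} (hz : z ∈ M 1)
    {n : ℕ} (hn : ∀ x ∈ M (n + 1), x = 0) : IsNilpotent (z : Unitization R A) := by
  have hpow : ∀ k, ∃ y ∈ M (k + 1), (z : Unitization R A) ^ (k + 1) = y := by
    intro k
    induction k with
    | zero => exact ⟨z, hz, pow_one _⟩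
    | succ k ih =>
      obtain ⟨y, hy, hzy⟩ := ih
      refine ⟨z * y, by simpa [add_comm] using hmul 1 (k + 1) z y hz hy, ?_⟩
      rw [pow_succ', hzy, Unitization.inr_mul]
  obtain ⟨y, hy, hzy⟩ := hpow n
  exact ⟨n + 1, by rw [hzy, hn y hy, Unitization.inr_zero]⟩

end QuasiRegular

namespace PathAlgebraOn

open Submodule

variable {K : Type} [Field K] {G : DGraph} {A : Type} [NonUnitalRing A] [Module K A]
  (PA : PathAlgebraOn K G A)

lemma basis_ofVertex_mul_basis {v : G.V} {p : GPath G} (h : p.src = v) :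
    PA.basis (GPath.ofVertex v) * PA.basis p = PA.basis p :=
  PA.mul_comp (GPath.ofVertex v) p h.symm

lemma basis_mul_basis_ofVertex {v : G.V} {p : GPath G} (h : p.rng = v) :
    PA.basis p * PA.basis (GPath.ofVertex v) = PA.basis p := by
  rw [PA.mul_comp p (GPath.ofVertex v) h, p.comp_ofVertex v h]

lemma isIdempotentElem_basis_ofVertex (v : G.V) : IsIdempotentElem (PA.basis (GPath.ofVertex v)) :=
  PA.basis_ofVertex_mul_basis rfl

lemma basis_inr_cons {e : G.Edge} {l : List G.Edge} (hl : l ≠ [])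
    (hc : G.IsComposable (e :: l)) :
    PA.basis (Sum.inr ⟨e :: l, List.cons_ne_nil _ _, hc⟩) =
      PA.basis (GPath.ofEdge e) * PA.basis (Sum.inr ⟨l, hl, List.IsChain.tail hc⟩) :=
  (PA.mul_comp (GPath.ofEdge e) (Sum.inr ⟨l, hl, List.IsChain.tail hc⟩)
    ((List.isChain_cons.mp hc).1 _ (List.head?_eq_some_head hl))).symm

lemma mem_span_image_univ (x : A) : x ∈ span K (PA.basis '' Set.univ) := by
  rw [Set.image_univ, PA.basis.span_eq]
  exact mem_top

def noReturnEdgeIdeal : TwoSidedIdeal A :=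
  TwoSidedIdeal.span {x : A | ∃ e : G.Edge, G.NoReturnEdge e ∧ x = PA.basis (GPath.ofEdge e)}

lemma basis_inr_mem_noReturnEdgeIdeal :
    ∀ (l : List G.Edge) (hne : l ≠ []) (hc : G.IsComposable l),
    ¬ G.Reachable (G.r (l.getLast hne)) (G.s (l.head hne)) →
    PA.basis (Sum.inr ⟨l, hne, hc⟩) ∈ PA.noReturnEdgeIdeal
  | [], hne, _, _ => absurd rfl hne
  | e :: l, _, hc, hret => by
    by_cases hl : l = []
    · subst hl
      exact TwoSidedIdeal.subset_span ⟨e, hret, rfl⟩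
    rw [PA.basis_inr_cons hl hc]
    by_cases he : G.NoReturnEdge e
    · exact TwoSidedIdeal.mul_mem_right _ _ _ (TwoSidedIdeal.subset_span ⟨e, he, rfl⟩)
    refine TwoSidedIdeal.mul_mem_left _ _ _
      (basis_inr_mem_noReturnEdgeIdeal l hl (List.IsChain.tail hc) fun hreach => hret ?_)
    have hhead : G.s (l.head hl) = G.r e :=
      ((List.isChain_cons.mp hc).1 _ (List.head?_eq_some_head hl)).symm
    rw [List.getLast_cons hl]
    exact hreach.trans (hhead ▸ not_not.mp he)

lemma basis_mem_noReturnEdgeIdeal {p : GPath G} (hp : G.NoReturnPath p) :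
    PA.basis p ∈ PA.noReturnEdgeIdeal := by
  rcases p with v | l
  · exact absurd hp.1 (lt_irrefl 0)
  · exact PA.basis_inr_mem_noReturnEdgeIdeal l.1 l.2.1 l.2.2 hp.2

lemma basis_ofVertex_mul_of_mem_span [SMulCommClass K A A] {v : G.V} {x : A}
    (hx : x ∈ span K (PA.basis '' {p | p.src = v})) :
    PA.basis (GPath.ofVertex v) * x = x := by
  have hle : span K (PA.basis '' {p | p.src = v}) ≤
      LinearMap.eqLocus (LinearMap.mulLeft K (PA.basis (GPath.ofVertex v))) LinearMap.id :=
    span_le.mpr (by rintro _ ⟨p, hp, rfl⟩; exact PA.basis_ofVertex_mul_basis hp)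
  exact hle hx

lemma mul_basis_ofVertex_of_mem_span [IsScalarTower K A A] {v : G.V} {x : A}
    (hx : x ∈ span K (PA.basis '' {p | p.rng = v})) :
    x * PA.basis (GPath.ofVertex v) = x := by
  have hle : span K (PA.basis '' {p | p.rng = v}) ≤
      LinearMap.eqLocus (LinearMap.mulRight K (PA.basis (GPath.ofVertex v))) LinearMap.id :=
    span_le.mpr (by rintro _ ⟨p, hp, rfl⟩; exact PA.basis_mul_basis_ofVertex hp)
  exact hle hx

lemma repr_basis_ofVertex_mul_apply [SMulCommClass K A A] (x : A) {p : GPath G} :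
    PA.basis.repr (PA.basis (GPath.ofVertex p.src) * x) p = PA.basis.repr x p := by
  refine LinearMap.congr_fun (PA.basis.ext (f₁ := Finsupp.lapply p ∘ₗ
    PA.basis.repr.toLinearMap ∘ₗ LinearMap.mulLeft K (PA.basis (GPath.ofVertex p.src)))
    (f₂ := Finsupp.lapply p ∘ₗ PA.basis.repr.toLinearMap) fun q => ?_) x
  simp only [LinearMap.coe_comp, Function.comp_apply, LinearMap.mulLeft_apply,
    LinearEquiv.coe_coe, Finsupp.lapply_apply]
  by_cases hq : q.src = p.src
  · rw [PA.basis_ofVertex_mul_basis hq]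
  · rw [PA.mul_ncomp _ _ (Ne.symm hq), map_zero, PA.basis.repr_self,
      Finsupp.single_eq_of_ne (fun hpq => hq (congrArg GPath.src hpq).symm), Finsupp.zero_apply]

lemma repr_mul_basis_apply_comp [IsScalarTower K A A] (x : A) {p q : GPath G}
    (h : p.rng = q.src) : PA.basis.repr (x * PA.basis q) (p.comp q h) = PA.basis.repr x p := by
  classical
  refine LinearMap.congr_fun (PA.basis.ext (f₁ := Finsupp.lapply (p.comp q h) ∘ₗ
    PA.basis.repr.toLinearMap ∘ₗ LinearMap.mulRight K (PA.basis q))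
    (f₂ := Finsupp.lapply p ∘ₗ PA.basis.repr.toLinearMap) fun p' => ?_) x
  simp only [LinearMap.coe_comp, Function.comp_apply, LinearMap.mulRight_apply,
    LinearEquiv.coe_coe, Finsupp.lapply_apply]
  by_cases hp' : p'.rng = q.src
  · rw [PA.mul_comp p' q hp', PA.basis.repr_self, PA.basis.repr_self, Finsupp.single_apply,
      Finsupp.single_apply, GPath.comp_inj_left]
  · rw [PA.mul_ncomp p' q hp', map_zero, PA.basis.repr_self,
      Finsupp.single_eq_of_ne (fun hpp' : p = p' => hp' (hpp' ▸ h)), Finsupp.zero_apply]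

variable [IsScalarTower K A A] [SMulCommClass K A A]

lemma mul_mem_span_image {s t w : Set (GPath G)}
    (hw : ∀ p ∈ s, ∀ q ∈ t, ∀ h : p.rng = q.src, p.comp q h ∈ w) {x y : A}
    (hx : x ∈ span K (PA.basis '' s)) (hy : y ∈ span K (PA.basis '' t)) :
    x * y ∈ span K (PA.basis '' w) := by
  have hxy := apply_mem_map₂ (LinearMap.mul K A) hx hy
  rw [map₂_span_span] at hxy
  refine span_le.mpr ?_ hxy
  rintro _ ⟨_, ⟨p, hp, rfl⟩, _, ⟨q, hq, rfl⟩, rfl⟩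
  change PA.basis p * PA.basis q ∈ _
  by_cases h : p.rng = q.src
  · rw [PA.mul_comp p q h]
    exact subset_span ⟨_, hw p hp q hq h, rfl⟩
  · rw [PA.mul_ncomp p q h]
    exact zero_mem _

def noReturnIdeal : TwoSidedIdeal A :=
  TwoSidedIdeal.mk' (span K (PA.basis '' {p | G.NoReturnPath p})) (zero_mem _) add_mem neg_mem
    (fun hy => PA.mul_mem_span_image (fun _ _ _ hq h => hq.comp_left h)
      (PA.mem_span_image_univ _) hy)
    (fun hx => PA.mul_mem_span_image (fun _ hp _ _ h => hp.comp_right h) hx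
      (PA.mem_span_image_univ _))

lemma coe_noReturnIdeal :
    (PA.noReturnIdeal : Set A) = span K (PA.basis '' {p | G.NoReturnPath p}) :=
  TwoSidedIdeal.coe_mk' ..

lemma mul_mem_span_src {v : G.V} {x : A} (hx : x ∈ span K (PA.basis '' {p | p.src = v}))
    (y : A) : x * y ∈ span K (PA.basis '' {p | p.src = v}) :=
  PA.mul_mem_span_image (fun p hp q _ h => (p.src_comp q h).trans hp) hx (PA.mem_span_image_univ y)

lemma mul_mem_span_rng {v : G.V} (x : A) {y : A} (hy : y ∈ span K (PA.basis '' {p | p.rng = v})) :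
    x * y ∈ span K (PA.basis '' {p | p.rng = v}) :=
  PA.mul_mem_span_image (fun p _ q hq h => (p.rng_comp q h).trans hq) (PA.mem_span_image_univ x) hy

lemma repr_mul_apply_comp_of_forall_length_le {x y : A} {p₀ q₀ : GPath G}
    (h : p₀.rng = q₀.src)
    (hx : ∀ p ∈ (PA.basis.repr x).support, p.length ≤ p₀.length)
    (hy : ∀ q ∈ (PA.basis.repr y).support, q.length ≤ q₀.length) :
    PA.basis.repr (x * y) (p₀.comp q₀ h) = PA.basis.repr x p₀ * PA.basis.repr y q₀ := by
  have hvanish : ∀ p q : GPath G, p.length ≤ p₀.length → q.length ≤ q₀.length →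
      ¬ (p = p₀ ∧ q = q₀) →
        PA.basis.repr (PA.basis p * PA.basis q) (p₀.comp q₀ h) = 0 := by
    intro p q hp hq hne
    by_cases hc : p.rng = q.src
    · rw [PA.mul_comp p q hc, PA.basis.repr_self]
      refine Finsupp.single_eq_of_ne fun heq => hne ?_
      have hlen := congrArg GPath.length heq
      rw [GPath.length_comp, GPath.length_comp] at hlen
      obtain ⟨hp₀, hq₀⟩ := GPath.comp_injective h hc (by omega) heq
      exact ⟨hp₀.symm, hq₀.symm⟩
    · rw [PA.mul_ncomp p q hc, map_zero, Finsupp.zero_apply]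
  have hexp := LinearMap.sum_repr_mul_repr_mul PA.basis PA.basis (B := LinearMap.mul K A) x y
  rw [LinearMap.mul_apply'] at hexp
  rw [← hexp]
  simp only [Finsupp.sum, map_sum, map_smul, Finsupp.coe_finsetSum, Finset.sum_apply,
    Finsupp.smul_apply, smul_eq_mul, LinearMap.mul_apply']
  rw [Finset.sum_eq_single p₀, Finset.sum_eq_single q₀]
  · rw [PA.mul_comp p₀ q₀ h, PA.basis.repr_self, Finsupp.single_eq_same, mul_one]
  · intro q hq hne
    rw [hvanish p₀ q le_rfl (hy q hq) (fun h' => hne h'.2), mul_zero, mul_zero]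
  · intro hq
    rw [Finsupp.notMem_support_iff.mp hq, zero_mul, mul_zero]
  · intro p hp hne
    refine Finset.sum_eq_zero fun q hq => ?_
    rw [hvanish p q (hx p hp) (hy q hq) (fun h' => hne h'.1), mul_zero, mul_zero]
  · intro hp
    rw [Finsupp.notMem_support_iff.mp hp]
    exact Finset.sum_eq_zero fun q _ => zero_mul _

lemma mem_span_ofVertex_of_mul_eq {v : G.V} {x y : A}
    (hx : x ∈ span K (PA.basis '' {p | p.rng = v}))
    (hy : y ∈ span K (PA.basis '' {p | p.src = v}))
    (hxy : x * y = PA.basis (GPath.ofVertex v)) : x ∈ K ∙ PA.basis (GPath.ofVertex v) := by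
  classical
  have hx0 : PA.basis.repr x ≠ 0 := by
    rw [Ne, LinearEquiv.map_eq_zero_iff]
    rintro rfl
    exact PA.basis.ne_zero _ (by rw [← hxy, zero_mul])
  have hy0 : PA.basis.repr y ≠ 0 := by
    rw [Ne, LinearEquiv.map_eq_zero_iff]
    rintro rfl
    exact PA.basis.ne_zero _ (by rw [← hxy, mul_zero])
  obtain ⟨p₀, hp₀, hp₀max⟩ :=
    Finset.exists_max_image _ GPath.length (Finsupp.support_nonempty_iff.mpr hx0)
  obtain ⟨q₀, hq₀, hq₀max⟩ :=
    Finset.exists_max_image _ GPath.length (Finsupp.support_nonempty_iff.mpr hy0)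
  rw [Module.Basis.mem_span_image] at hx hy
  have h : p₀.rng = q₀.src := (hx hp₀).trans (hy hq₀).symm
  have htop := PA.repr_mul_apply_comp_of_forall_length_le h hp₀max hq₀max
  rw [hxy, PA.basis.repr_self] at htop
  have hcomp : p₀.comp q₀ h = GPath.ofVertex v := by
    by_contra hne
    rw [Finsupp.single_eq_of_ne hne] at htop
    exact mul_ne_zero (Finsupp.mem_support_iff.mp hp₀) (Finsupp.mem_support_iff.mp hq₀)
      htop.symm
  have hlen : p₀.length + q₀.length = 0 := by rw [← GPath.length_comp p₀ q₀ h, hcomp]; rfl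
  rw [← Set.image_singleton, Module.Basis.mem_span_image]
  intro p hp
  have hp' := GPath.eq_ofVertex_of_length_eq_zero (p := p)
    (by have := hp₀max p hp; omega)
  rw [Set.mem_singleton_iff, hp']
  exact congrArg GPath.ofVertex ((congrArg GPath.rng hp').symm.trans (hx hp))

lemma mem_span_ofVertex_of_quasiReg {v : G.V} {t : A}
    (hts : t ∈ span K (PA.basis '' {p | p.src = v}))
    (htr : t ∈ span K (PA.basis '' {p | p.rng = v})) (ht : QuasiReg A t) :
    t ∈ K ∙ PA.basis (GPath.ofVertex v) := by
  obtain ⟨w, hw, -⟩ := ht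
  set e := PA.basis (GPath.ofVertex v)
  have hes : e ∈ span K (PA.basis '' {p | p.src = v}) := subset_span ⟨_, rfl, rfl⟩
  have her : e ∈ span K (PA.basis '' {p | p.rng = v}) := subset_span ⟨_, rfl, rfl⟩
  have het : e * t = t := PA.basis_ofVertex_mul_of_mem_span hts
  have hte : t * e = t := PA.mul_basis_ofVertex_of_mem_span htr
  set u := e * w * e
  have hus : u ∈ span K (PA.basis '' {p | p.src = v}) :=
    PA.mul_mem_span_src (PA.mul_mem_span_src hes w) e
  have hu : t + u - t * u = 0 := by
    have hsandwich := congrArg (fun a => e * a * e) hw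
    simp only [mul_add, mul_sub, add_mul, sub_mul, ← mul_assoc, het, hte, mul_zero,
      zero_mul] at hsandwich
    rwa [show t * u = t * w * e by simp only [u, ← mul_assoc, hte]]
  have hprod : (e - t) * (e - u) = e := by
    calc (e - t) * (e - u) = e * e - e * u - t * e + t * u := by noncomm_ring
      _ = e - (t + u - t * u) := by
        rw [(PA.isIdempotentElem_basis_ofVertex v).eq, PA.basis_ofVertex_mul_of_mem_span hus, hte]
        abel
      _ = e := by rw [hu, sub_zero]
  obtain ⟨c, hc⟩ := mem_span_singleton.mp
    (PA.mem_span_ofVertex_of_mul_eq (sub_mem her htr) (sub_mem hes hus) hprod)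
  exact mem_span_singleton.mpr ⟨1 - c, by rw [sub_smul, one_smul, hc, sub_sub_cancel]⟩

lemma eq_zero_of_forall_quasiReg_smul {v : G.V} {t : A}
    (hts : t ∈ span K (PA.basis '' {p | p.src = v}))
    (htr : t ∈ span K (PA.basis '' {p | p.rng = v})) (ht : ∀ k : K, QuasiReg A (k • t)) :
    t = 0 := by
  obtain ⟨c, rfl⟩ :=
    mem_span_singleton.mp (PA.mem_span_ofVertex_of_quasiReg hts htr (by simpa using ht 1))
  by_cases hc : c = 0
  · rw [hc, zero_smul]
  · have he := ht c⁻¹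
    rw [smul_smul, inv_mul_cancel₀ hc, one_smul] at he
    exact absurd (he.eq_zero_of_isIdempotentElem (PA.isIdempotentElem_basis_ofVertex v))
      (PA.basis.ne_zero _)

lemma jacRad_subset_noReturnIdeal : jacRad A ⊆ PA.noReturnIdeal := by
  intro z hz
  rw [coe_noReturnIdeal, SetLike.mem_coe, PA.basis.mem_span_image]
  intro p hp
  by_contra hnr
  obtain ⟨q, hqs, hqr⟩ := reachable_of_not_noReturnPath hnr
  set e := PA.basis (GPath.ofVertex p.src)
  set t := e * z * PA.basis q
  have hts : t ∈ span K (PA.basis '' {r | r.src = p.src}) :=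
    PA.mul_mem_span_src (PA.mul_mem_span_src (subset_span ⟨GPath.ofVertex p.src, rfl, rfl⟩) z) _
  have htr : t ∈ span K (PA.basis '' {r | r.rng = p.src}) :=
    hqr ▸ PA.mul_mem_span_rng (e * z) (subset_span ⟨q, rfl, rfl⟩)
  have ht : t = 0 := PA.eq_zero_of_forall_quasiReg_smul hts htr fun k => by
    simpa only [smul_mul_assoc] using hz (k • e) (PA.basis q)
  have hcoeff : PA.basis.repr t (p.comp q hqs.symm) = PA.basis.repr (e * z) p :=
    PA.repr_mul_basis_apply_comp (e * z) hqs.symm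
  rw [ht, map_zero, Finsupp.zero_apply, PA.repr_basis_ofVertex_mul_apply] at hcoeff
  exact Finsupp.mem_support_iff.mp hp hcoeff.symm

lemma isNilpotent_of_mem_span_noReturnPath {z : A}
    (hz : z ∈ span K (PA.basis '' {p | G.NoReturnPath p})) :
    IsNilpotent (z : Unitization K A) := by
  classical
  set W := (PA.basis.repr z).support.image GPath.src
  refine isNilpotent_inr_of_filtration K
    (M := fun k => span K (PA.basis '' {p | k ≤ (p.noReturnVertices W).card})) (n := W.card)
    (fun j k x y hx hy => PA.mul_mem_span_image (fun p hp q hq h =>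
      (add_le_add hp hq).trans (GPath.card_noReturnVertices_add_le W h)) hx hy) ?_ ?_
  · rw [PA.basis.mem_span_image] at hz
    rw [SetLike.mem_coe, PA.basis.mem_span_image]
    exact fun p hp => (hz hp).one_le_card_noReturnVertices (Finset.mem_image_of_mem _ hp)
  · have hempty : {p : GPath G | W.card + 1 ≤ (p.noReturnVertices W).card} = ∅ :=
      Set.eq_empty_of_forall_notMem fun p (hp : W.card + 1 ≤ _) => by
        have := GPath.card_noReturnVertices_le W p
        omega
    intro x hx
    change x ∈ span K (PA.basis '' {p | W.card + 1 ≤ _}) at hx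
    rwa [hempty, Set.image_empty, span_empty, mem_bot] at hx

lemma noReturnIdeal_subset_jacRad : (PA.noReturnIdeal : Set A) ⊆ jacRad A := by
  intro z hz a b
  have hazb := PA.noReturnIdeal.mul_mem_right _ b (PA.noReturnIdeal.mul_mem_left a _ hz)
  rw [← SetLike.mem_coe, coe_noReturnIdeal] at hazb
  exact quasiReg_of_isNilpotent K (PA.isNilpotent_of_mem_span_noReturnPath hazb)

lemma jacRad_eq_noReturnIdeal : jacRad A = PA.noReturnIdeal :=
  PA.jacRad_subset_noReturnIdeal.antisymm PA.noReturnIdeal_subset_jacRad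

lemma noReturnIdeal_eq_noReturnEdgeIdeal : PA.noReturnIdeal = PA.noReturnEdgeIdeal := by
  refine le_antisymm (fun x hx => ?_) (TwoSidedIdeal.span_le.mpr ?_)
  · rw [← SetLike.mem_coe, coe_noReturnIdeal, SetLike.mem_coe, PA.basis.mem_span_image] at hx
    rw [← PA.basis.linearCombination_repr x, Finsupp.linearCombination_apply]
    refine TwoSidedIdeal.finsuppSum_mem _ _ fun p hp => ?_
    -- `TwoSidedIdeal`s need not be closed under `K`; the local unit at `s(p)` absorbs scalars.
    rw [← PA.basis_ofVertex_mul_basis (rfl : p.src = p.src), ← smul_mul_assoc]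
    exact TwoSidedIdeal.mul_mem_left _ _ _ (PA.basis_mem_noReturnEdgeIdeal (hx hp))
  · rintro _ ⟨e, he, rfl⟩
    rw [coe_noReturnIdeal]
    exact subset_span ⟨_, he.noReturnPath_ofEdge, rfl⟩

end PathAlgebraOn

/-- the Jacobson radical of `KE` is the span of the paths without
return, which is also the two-sided ideal generated by the edges without return. -/
theorem stmt18 (K : Type) [Field K] (G : DGraph)
    (A : Type) [NonUnitalRing A] [Module K A] [SMulCommClass K A A] [IsScalarTower K A A]
    (PA : PathAlgebraOn K G A) :
    jacRad A =
      ((Submodule.span K (PA.basis '' {p : GPath G | G.NoReturnPath p}) :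
        Submodule K A) : Set A) ∧
    jacRad A =
      ((TwoSidedIdeal.span {x : A | ∃ e : G.Edge, G.NoReturnEdge e ∧
        x = PA.basis (GPath.ofEdge e)} : TwoSidedIdeal A) : Set A) :=
  ⟨PA.jacRad_eq_noReturnIdeal.trans PA.coe_noReturnIdeal,
    PA.jacRad_eq_noReturnIdeal.trans (congrArg _ PA.noReturnIdeal_eq_noReturnEdgeIdeal)⟩
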